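/- If G is a reflexive n-cycle represented by a word W over {+,-,*} with height h(W) = 1, then the automorphism group of G is trivial. -/
import Mathlib

inductive Symb : Type
  | plus | minus | star
deriving DecidableEq

def cycArc (W : List Symb) (i j : ZMod W.length) : Prop :=
  i = j ∨
    (∃ t : Fin W.length, W.get t ≠ Symb.minus ∧ i = (t : ZMod W.length) ∧ j = i + 1) ∨
    (∃ t : Fin W.length, W.get t ≠ Symb.plus ∧ j = (t : ZMod W.length) ∧ i = j + 1)

def height (W : List Symb) : ℤ := (W.count Symb.plus : ℤ) - (W.count Symb.minus : ℤ)

def sval : Symb → ℤ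
  | Symb.plus => 1
  | Symb.minus => -1
  | Symb.star => 0

lemma sum_get (L : List Symb) : ∑ j : Fin L.length, sval (L.get j) = height L := by
  induction L with
  | nil => simp [height]
  | cons a l ih =>
    have : ∑ j : Fin (l.length + 1), sval ((a :: l).get j) = height (a :: l) := by
      rw [Fin.sum_univ_succ]
      have h2 : ∀ i : Fin l.length, (a :: l).get i.succ = l.get i := fun i => rfl
      simp only [List.get_cons_zero, h2]
      rw [ih]
      cases a <;> simp [height, List.count_cons, sval] <;> ring
    exact this

/-- A reflexive `n`-cycle `C(W)` with `h(W) = 1` has trivial automorphism group. -/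
theorem stmt_15 (W : List Symb) (hn : 3 ≤ W.length) (hh : height W = 1)
    (f : ZMod W.length ≃ ZMod W.length)
    (hf : ∀ i j, cycArc W i j → cycArc W (f i) (f j))
    (hf' : ∀ i j, cycArc W i j → cycArc W (f.symm i) (f.symm j)) :
    f = Equiv.refl (ZMod W.length) := by
  have hn0 : W.length ≠ 0 := by omega
  haveI : NeZero W.length := ⟨hn0⟩
  -- basic facts in ZMod n
  have h1 : (1 : ZMod W.length) ≠ 0 := by
    intro h
    have : ((1 : ℕ) : ZMod W.length) = 0 := by exact_mod_cast h
    rw [ZMod.natCast_eq_zero_iff] at this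
    have := Nat.le_of_dvd one_pos this
    omega
  have h2 : (2 : ZMod W.length) ≠ 0 := by
    intro h
    have : ((2 : ℕ) : ZMod W.length) = 0 := by exact_mod_cast h
    rw [ZMod.natCast_eq_zero_iff] at this
    have := Nat.le_of_dvd two_pos this
    omega
  have castval : ∀ i : ZMod W.length, ((i.val : ℕ) : ZMod W.length) = i := fun i => by
    rw [ZMod.natCast_val, ZMod.cast_id]
  set w : ZMod W.length → Symb := fun i => W.get ⟨i.val, ZMod.val_lt i⟩ with hw
  -- arc characterizations
  have arcF : ∀ i : ZMod W.length, cycArc W i (i + 1) ↔ w i ≠ Symb.minus := by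
    intro i
    constructor
    · rintro (h | ⟨t, ht, hti, -⟩ | ⟨t, ht, hji, hij⟩)
      · exact absurd (by linear_combination h : (0 : ZMod W.length) = 1) (Ne.symm h1)
      · have hv : (⟨i.val, ZMod.val_lt i⟩ : Fin W.length) = t :=
          Fin.ext (by rw [hti]; exact ZMod.val_cast_of_lt t.isLt)
        show W.get ⟨i.val, ZMod.val_lt i⟩ ≠ Symb.minus
        rw [hv]; exact ht
      · exfalso
        have : (2 : ZMod W.length) = 0 := by linear_combination - hij
        exact h2 this
    · intro h
      right; left
      exact ⟨⟨i.val, ZMod.val_lt i⟩, h, (castval i).symm, rfl⟩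
  have arcB : ∀ i : ZMod W.length, cycArc W (i + 1) i ↔ w i ≠ Symb.plus := by
    intro i
    constructor
    · rintro (h | ⟨t, ht, hti, hij⟩ | ⟨t, ht, hji, -⟩)
      · exact absurd (by linear_combination h : (1 : ZMod W.length) = 0) h1
      · exfalso
        have : (2 : ZMod W.length) = 0 := by linear_combination - hij
        exact h2 this
      · have hv : (⟨i.val, ZMod.val_lt i⟩ : Fin W.length) = t :=
          Fin.ext (by rw [hji]; exact ZMod.val_cast_of_lt t.isLt)
        show W.get ⟨i.val, ZMod.val_lt i⟩ ≠ Symb.plus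
        rw [hv]; exact ht
    · intro h
      right; right
      exact ⟨⟨i.val, ZMod.val_lt i⟩, h, (castval i).symm, rfl⟩
  have arcShape : ∀ i j : ZMod W.length, cycArc W i j → i = j ∨ j = i + 1 ∨ i = j + 1 := by
    rintro i j (h | ⟨t, -, hti, hj⟩ | ⟨t, -, htj, hi⟩)
    · exact Or.inl h
    · exact Or.inr (Or.inl hj)
    · exact Or.inr (Or.inr hi)
  have edge : ∀ i : ZMod W.length, cycArc W i (i + 1) ∨ cycArc W (i + 1) i := by
    intro i
    rcases hs : w i with _ | _ | _
    · exact Or.inl ((arcF i).mpr (by simp [hs]))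
    · exact Or.inr ((arcB i).mpr (by simp [hs]))
    · exact Or.inl ((arcF i).mpr (by simp [hs]))
  have fne : ∀ i j : ZMod W.length, i ≠ j → f i ≠ f j := fun i j hij h => hij (f.injective h)
  have step : ∀ i : ZMod W.length, f (i + 1) = f i + 1 ∨ f (i + 1) = f i - 1 := by
    intro i
    have hne : f (i + 1) ≠ f i := fne _ _ (fun h => h1 (by linear_combination h))
    rcases edge i with h | h
    · rcases arcShape _ _ (hf _ _ h) with h' | h' | h'
      · exact absurd h'.symm hne
      · exact Or.inl h'
      · exact Or.inr (by linear_combination -h')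
    · rcases arcShape _ _ (hf _ _ h) with h' | h' | h'
      · exact absurd h' hne
      · exact Or.inr (by linear_combination -h')
      · exact Or.inl h'
  have two_ne : ∀ i : ZMod W.length, i + 1 + 1 ≠ i := by
    intro i h
    exact h2 (by linear_combination h)
  have nbU : ∀ i : ZMod W.length, f (i + 1) = f i + 1 → f (i + 1 + 1) = f (i + 1) + 1 := by
    intro i h
    rcases step (i + 1) with h' | h'
    · exact h'
    · exfalso
      exact fne _ _ (two_ne i) (by linear_combination h' + h)
  have nbD : ∀ i : ZMod W.length, f (i + 1) = f i - 1 → f (i + 1 + 1) = f (i + 1) - 1 := by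
    intro i h
    rcases step (i + 1) with h' | h'
    · exfalso
      exact fne _ _ (two_ne i) (by linear_combination h' + h)
    · exact h'
  -- shared counting infrastructure
  have hwget : ∀ j : Fin W.length, w (((j : ℕ) : ZMod W.length)) = W.get j := by
    intro j
    show W.get ⟨(((j : ℕ) : ZMod W.length)).val, _⟩ = W.get j
    congr 1
    exact Fin.ext (ZMod.val_cast_of_lt j.isLt)
  let e : Fin W.length ≃ ZMod W.length :=
    ⟨fun j => ((j : ℕ) : ZMod W.length), fun i => ⟨i.val, ZMod.val_lt i⟩,
     fun j => Fin.ext (ZMod.val_cast_of_lt j.isLt), fun i => castval i⟩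
  have hsumZ : ∑ i : ZMod W.length, sval (w i) = 1 := by
    rw [← Equiv.sum_comp e (fun i => sval (w i))]
    have : ∀ j : Fin W.length, sval (w (e j)) = sval (W.get j) := fun j => by
      rw [show e j = ((j : ℕ) : ZMod W.length) from rfl, hwget]
    rw [Finset.sum_congr rfl (fun j _ => this j), sum_get, hh]
  rcases step 0 with hdir | hdir
  · -- rotation case : f i = i + f 0
    have hrotN : ∀ k : ℕ, f ((k : ℕ) : ZMod W.length) = f 0 + (k : ℕ) ∧
        f (((k : ℕ) : ZMod W.length) + 1) = f 0 + (k : ℕ) + 1 := by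
      intro k
      induction k with
      | zero =>
        refine ⟨by simp, ?_⟩
        simpa using hdir
      | succ k ih =>
        obtain ⟨a, b⟩ := ih
        have hc : (((k + 1 : ℕ)) : ZMod W.length) = ((k : ℕ) : ZMod W.length) + 1 := by
          push_cast; ring
        refine ⟨?_, ?_⟩
        · rw [hc, b]; push_cast; ring
        · rw [hc]
          have dstep : f (((k : ℕ) : ZMod W.length) + 1) = f ((k : ℕ) : ZMod W.length) + 1 := by
            rw [a, b]
          rw [nbU _ dstep, b]; push_cast; ring
    have hrot : ∀ i : ZMod W.length, f i = i + f 0 := by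
      intro i
      have := (hrotN i.val).1
      rw [castval] at this
      rw [this]; ring
    have hsymm : ∀ j : ZMod W.length, f.symm j = j - f 0 := by
      intro j
      apply f.injective
      rw [Equiv.apply_symm_apply, hrot (j - f 0)]; ring
    have hvalinv : ∀ i : ZMod W.length, sval (w (i + f 0)) = sval (w i) := by
      intro i
      have hm : w (i + f 0) ≠ Symb.minus ↔ w i ≠ Symb.minus := by
        constructor
        · intro h
          have h3 := hf' _ _ ((arcF (i + f 0)).mpr h)
          rw [hsymm, hsymm] at h3
          have e1 : i + f 0 - f 0 = i := by ring
          have e2 : i + f 0 + 1 - f 0 = i + 1 := by ring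
          rw [e1, e2] at h3
          exact (arcF i).mp h3
        · intro h
          have h3 := hf _ _ ((arcF i).mpr h)
          rw [hrot i, hrot (i + 1)] at h3
          have e2 : i + 1 + f 0 = i + f 0 + 1 := by ring
          rw [e2] at h3
          exact (arcF (i + f 0)).mp h3
      have hp : w (i + f 0) ≠ Symb.plus ↔ w i ≠ Symb.plus := by
        constructor
        · intro h
          have h3 := hf' _ _ ((arcB (i + f 0)).mpr h)
          rw [hsymm, hsymm] at h3
          have e1 : i + f 0 - f 0 = i := by ring
          have e2 : i + f 0 + 1 - f 0 = i + 1 := by ring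
          rw [e1, e2] at h3
          exact (arcB i).mp h3
        · intro h
          have h3 := hf _ _ ((arcB i).mpr h)
          rw [hrot i, hrot (i + 1)] at h3
          have e2 : i + 1 + f 0 = i + f 0 + 1 := by ring
          rw [e2] at h3
          exact (arcB (i + f 0)).mp h3
      cases hwi : w i <;> cases hwic : w (i + f 0) <;>
        simp [hwi, hwic, sval] at hm hp ⊢
    -- counting: partial sums
    have hshiftc : ∀ j : ℕ,
        sval (w (((f 0).val + j : ℕ) : ZMod W.length)) = sval (w ((j : ℕ) : ZMod W.length)) := by
      intro j
      have hc : ((((f 0).val + j : ℕ)) : ZMod W.length) = ((j : ℕ) : ZMod W.length) + f 0 := by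
        push_cast [castval]; ring
      rw [hc, hvalinv]
    have hshiftn : ∀ j : ℕ,
        sval (w ((W.length + j : ℕ) : ZMod W.length)) = sval (w ((j : ℕ) : ZMod W.length)) := by
      intro j
      have hc : (((W.length + j : ℕ)) : ZMod W.length) = ((j : ℕ) : ZMod W.length) := by
        push_cast [ZMod.natCast_self]; ring
      rw [hc]
    set P : ℕ → ℤ := fun m => ∑ j ∈ Finset.range m, sval (w ((j : ℕ) : ZMod W.length)) with hP
    have hPadd : ∀ a : ℕ,
        (∀ j : ℕ, sval (w ((a + j : ℕ) : ZMod W.length)) = sval (w ((j : ℕ) : ZMod W.length))) →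
        ∀ m, P (a + m) = P a + P m := by
      intro a ha m
      rw [hP]
      simp only
      rw [Finset.sum_range_add]
      congr 1
      exact Finset.sum_congr rfl fun j _ => ha j
    have hPn : P W.length = 1 := by
      rw [hP]
      simp only
      rw [← Fin.sum_univ_eq_sum_range (fun j => sval (w ((j : ℕ) : ZMod W.length))) W.length]
      rw [Finset.sum_congr rfl (fun j _ => by rw [hwget j]), sum_get, hh]
    have hPmulc : ∀ k : ℕ, P (k * (f 0).val) = k * P ((f 0).val) := by
      intro k
      induction k with
      | zero => simp [hP]
      | succ k ih =>
        have hc : (k + 1) * (f 0).val = (f 0).val + k * (f 0).val := by ring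
        rw [hc, hPadd _ hshiftc, ih]; push_cast; ring
    have hPmuln : ∀ k : ℕ, P (k * W.length) = k := by
      intro k
      induction k with
      | zero => simp [hP]
      | succ k ih =>
        have hc : (k + 1) * W.length = W.length + k * W.length := by ring
        rw [hc, hPadd _ hshiftn, ih, hPn]
        push_cast
        ring
    have key : (W.length : ℤ) * P ((f 0).val) = ((f 0).val : ℤ) := by
      have k1 := hPmulc W.length
      have k2 := hPmuln ((f 0).val)
      rw [Nat.mul_comm] at k1
      rw [k1] at k2
      exact k2
    have hdvd : W.length ∣ (f 0).val := by
      have : ((W.length : ℤ)) ∣ ((f 0).val : ℤ) := ⟨P ((f 0).val), key.symm⟩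
      exact_mod_cast this
    have hcval : (f 0).val = 0 := Nat.eq_zero_of_dvd_of_lt hdvd (ZMod.val_lt _)
    have hczero : f 0 = 0 := by
      rw [← castval (f 0), hcval]
      simp
    apply Equiv.ext
    intro i
    rw [hrot i, hczero, add_zero]
    rfl
  · -- reflection case : f i = f 0 - i
    have hrefN : ∀ k : ℕ, f ((k : ℕ) : ZMod W.length) = f 0 - (k : ℕ) ∧
        f (((k : ℕ) : ZMod W.length) + 1) = f 0 - (k : ℕ) - 1 := by
      intro k
      induction k with
      | zero =>
        refine ⟨by simp, ?_⟩
        simpa using hdir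
      | succ k ih =>
        obtain ⟨a, b⟩ := ih
        have hc : (((k + 1 : ℕ)) : ZMod W.length) = ((k : ℕ) : ZMod W.length) + 1 := by
          push_cast; ring
        refine ⟨?_, ?_⟩
        · rw [hc, b]; push_cast; ring
        · rw [hc]
          have dstep : f (((k : ℕ) : ZMod W.length) + 1) = f ((k : ℕ) : ZMod W.length) - 1 := by
            rw [a, b]
          rw [nbD _ dstep, b]; push_cast; ring
    have href : ∀ i : ZMod W.length, f i = f 0 - i := by
      intro i
      have := (hrefN i.val).1
      rwa [castval] at this
    have hsymm : ∀ j : ZMod W.length, f.symm j = f 0 - j := by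
      intro j
      apply f.injective
      rw [Equiv.apply_symm_apply, href (f 0 - j)]; ring
    have hvalrefl : ∀ i : ZMod W.length, sval (w (f 0 - 1 - i)) = - sval (w i) := by
      intro i
      have hmp : w i ≠ Symb.minus ↔ w (f 0 - 1 - i) ≠ Symb.plus := by
        constructor
        · intro h
          have h3 := hf _ _ ((arcF i).mpr h)
          have e1 : f i = (f 0 - 1 - i) + 1 := by rw [href i]; ring
          have e2 : f (i + 1) = f 0 - 1 - i := by rw [href (i + 1)]; ring
          rw [e1, e2] at h3
          exact (arcB _).mp h3
        · intro h
          have h3 := hf' _ _ ((arcB (f 0 - 1 - i)).mpr h)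
          have e1 : f.symm (f 0 - 1 - i + 1) = i := by rw [hsymm]; ring
          have e2 : f.symm (f 0 - 1 - i) = i + 1 := by rw [hsymm]; ring
          rw [e1, e2] at h3
          exact (arcF i).mp h3
      have hpm : w i ≠ Symb.plus ↔ w (f 0 - 1 - i) ≠ Symb.minus := by
        constructor
        · intro h
          have h3 := hf _ _ ((arcB i).mpr h)
          have e1 : f (i + 1) = f 0 - 1 - i := by rw [href (i + 1)]; ring
          have e2 : f i = (f 0 - 1 - i) + 1 := by rw [href i]; ring
          rw [e1, e2] at h3
          exact (arcF _).mp h3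
        · intro h
          have h3 := hf' _ _ ((arcF (f 0 - 1 - i)).mpr h)
          have e1 : f.symm (f 0 - 1 - i) = i + 1 := by rw [hsymm]; ring
          have e2 : f.symm (f 0 - 1 - i + 1) = i := by rw [hsymm]; ring
          rw [e1, e2] at h3
          exact (arcB i).mp h3
      cases hwi : w i <;> cases hwj : w (f 0 - 1 - i) <;>
        simp [hwi, hwj, sval] at hmp hpm ⊢
    exfalso
    have hneg : ∑ i : ZMod W.length, sval (w i) = - ∑ i : ZMod W.length, sval (w i) := by
      calc ∑ i : ZMod W.length, sval (w i)
          = ∑ i : ZMod W.length, sval (w ((Equiv.subLeft (f 0 - 1)) i)) :=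
            (Equiv.sum_comp (Equiv.subLeft (f 0 - 1)) (fun i => sval (w i))).symm
        _ = ∑ i : ZMod W.length, - sval (w i) := by
            refine Finset.sum_congr rfl fun i _ => ?_
            rw [show (Equiv.subLeft (f 0 - 1)) i = f 0 - 1 - i from rfl, hvalrefl]
        _ = - ∑ i : ZMod W.length, sval (w i) := by simp
    rw [hsumZ] at hneg
    omega
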